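/- arXiv:2304.06960 — 2 statements merged into one kernel-verified Lean document; each statement's English description precedes it below -/
import Mathlib

section
/- If ŵ minimizes CV(w) over Q_n and sup_{w ∈ Q_n} |CV(w) − L(w) − c| / L(w) → 0 in probability for some constant c not depending on w, where L(w) > 0, then L(ŵ) / inf_{w ∈ Q_n} L(w) → 1 in probability. -/
open MeasureTheory Filter

/-!
Let `S = sup_w |CV w - L w - c| / L w`. Comparing `CV` at `ŵ` with `CV` at any `w` gives
`L ŵ * (1 - S) ≤ L w * (1 + S)`, hence `0 ≤ L ŵ / inf L - 1 ≤ 4 S` whenever `S ≤ 1/2`.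
So the ratio is within `4 S` of `1` outside the event `S > 1/2`, and the convergence of `S` to `0`
in probability transfers to it. Compactness and continuity only serve to make the supremum finite
(an unbounded `⨆` over `ℝ` is `0`).
-/

theorem abs_div_sub_one_le_of_mul_one_sub_le {a m S : ℝ} (ha : 0 < a) (hma : m ≤ a)
    (h : a * (1 - S) ≤ m * (1 + S)) (hS₀ : 0 ≤ S) (hS : S ≤ 1 / 2) :
    |a / m - 1| ≤ 4 * S := by
  have hm : 0 < m := by nlinarith
  rw [div_sub_one hm.ne', abs_div, abs_of_nonneg (by linarith), abs_of_pos hm,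
    div_le_iff₀ hm]
  nlinarith

section Deterministic

variable {α : Type*} {s : Set α} {L CV : α → ℝ} {c S : ℝ} {ŵ : α}

theorem mul_one_sub_le_mul_one_add_of_isMinOn (hmin : IsMinOn CV s ŵ) (hŵ : ŵ ∈ s)
    (hS : ∀ w ∈ s, |CV w - L w - c| ≤ S * L w) {w : α} (hw : w ∈ s) :
    L ŵ * (1 - S) ≤ L w * (1 + S) := by
  have hŵS := abs_le.mp (hS ŵ hŵ)
  have hwS := abs_le.mp (hS w hw)
  have hCV : CV ŵ ≤ CV w := hmin hw
  linarith

theorem abs_div_iInf_sub_one_le_of_isMinOn (hL : ∀ w ∈ s, 0 < L w) (hmin : IsMinOn CV s ŵ)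
    (hŵ : ŵ ∈ s) (hS : ∀ w ∈ s, |CV w - L w - c| ≤ S * L w) (hS_le : S ≤ 1 / 2) :
    |L ŵ / (⨅ w : s, L w) - 1| ≤ 4 * S := by
  have : Nonempty s := ⟨⟨ŵ, hŵ⟩⟩
  have hbdd : BddBelow (Set.range fun w : s => L w) :=
    ⟨0, by rintro _ ⟨w, rfl⟩; exact (hL w w.2).le⟩
  have hS₀ : 0 ≤ S := nonneg_of_mul_nonneg_left ((abs_nonneg _).trans (hS ŵ hŵ)) (hL ŵ hŵ)
  have hinf_le : ⨅ w : s, L w ≤ L ŵ := ciInf_le hbdd ⟨ŵ, hŵ⟩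
  have hle_inf : L ŵ * (1 - S) / (1 + S) ≤ ⨅ w : s, L w :=
    le_ciInf fun w => (div_le_iff₀ (by linarith)).mpr
      (mul_one_sub_le_mul_one_add_of_isMinOn hmin hŵ hS w.2)
  exact abs_div_sub_one_le_of_mul_one_sub_le (hL ŵ hŵ) hinf_le
    ((div_le_iff₀ (by linarith)).mp hle_inf) hS₀ hS_le

end Deterministic

theorem abs_sub_le_iSup_mul_of_isCompact {α : Type*} [TopologicalSpace α] {s : Set α}
    {L CV : α → ℝ} {c : ℝ} (hs : IsCompact s) (hL : ∀ w ∈ s, 0 < L w)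
    (hLcont : ContinuousOn L s) (hCVcont : ContinuousOn CV s) {w : α} (hw : w ∈ s) :
    |CV w - L w - c| ≤ (⨆ v : s, |CV v - L v - c| / L v) * L w := by
  have hcont : ContinuousOn (fun v => |CV v - L v - c| / L v) s :=
    ((hCVcont.sub hLcont).sub continuousOn_const).abs.div hLcont fun v hv => (hL v hv).ne'
  have hbdd : BddAbove (Set.range fun v : s => |CV v - L v - c| / L v) := by
    simpa only [Set.image_eq_range] using hs.bddAbove_image hcont
  exact (div_le_iff₀ (hL w hw)).mp (le_ciSup hbdd ⟨w, hw⟩)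

theorem tendstoInMeasure_of_dist_le_mul_dist {Ω ι E F : Type*} [MeasurableSpace Ω]
    {μ : Measure Ω} {l : Filter ι} [PseudoMetricSpace E] [PseudoMetricSpace F]
    {f : ι → Ω → E} {g : ι → Ω → F} {a : E} {b : F} {δ C : ℝ} (hδ : 0 < δ)
    (hfg : ∀ i ω, dist (g i ω) b ≤ δ → dist (f i ω) a ≤ C * dist (g i ω) b)
    (hg : TendstoInMeasure μ g l fun _ => b) :
    TendstoInMeasure μ f l fun _ => a := by
  rw [tendstoInMeasure_iff_dist] at hg ⊢
  intro ε hε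
  set η := min δ (ε / (|C| + 1))
  have hη : 0 < η := lt_min hδ (by positivity)
  have hsub : ∀ i, {ω | ε ≤ dist (f i ω) a} ⊆ {ω | η ≤ dist (g i ω) b} := by
    intro i ω hω
    by_contra! hgη
    simp only [Set.mem_ofPred_eq, not_le] at hω hgη
    have hCη : |C| * η < ε :=
      calc |C| * η ≤ |C| * (ε / (|C| + 1)) := by gcongr; exact min_le_right _ _
        _ < ε := by rw [mul_div_assoc', div_lt_iff₀ (by positivity)]; nlinarith
    have hfC := hfg i ω (hgη.le.trans (min_le_left _ _))
    have hCd : C * dist (g i ω) b ≤ |C| * η :=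
      (mul_le_mul_of_nonneg_right (le_abs_self C) dist_nonneg).trans (by gcongr)
    linarith
  exact tendsto_of_tendsto_of_tendsto_of_le_of_le tendsto_const_nhds (hg η hη)
    (fun _ => zero_le) fun i => measure_mono (hsub i)

theorem generic_asymptotic_optimality_general
    {Ω : Type*} [MeasurableSpace Ω] (μ : Measure Ω)
    (K : ℕ) (Q : Set (Fin K → ℝ)) (hQc : IsCompact Q)
    (L CV : ℕ → Ω → (Fin K → ℝ) → ℝ)
    (c : ℕ → Ω → ℝ)
    (hLpos : ∀ n ω, ∀ w ∈ Q, 0 < L n ω w)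
    (hLcont : ∀ n ω, ContinuousOn (L n ω) Q)
    (hCVcont : ∀ n ω, ContinuousOn (CV n ω) Q)
    (what : ℕ → Ω → (Fin K → ℝ))
    (hwhat : ∀ n ω, what n ω ∈ Q ∧ ∀ w ∈ Q, CV n ω (what n ω) ≤ CV n ω w)
    (hunif : TendstoInMeasure μ
      (fun n ω => ⨆ w : Q, |CV n ω w - L n ω w - c n ω| / L n ω w)
      atTop (fun _ => (0:ℝ))) :
    TendstoInMeasure μ
      (fun n ω => L n ω (what n ω) / ⨅ w : Q, L n ω w)
      atTop (fun _ => (1:ℝ)) := by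
  refine tendstoInMeasure_of_dist_le_mul_dist (δ := 1 / 2) (C := 4) (by norm_num) ?_ hunif
  intro n ω hS
  rw [Real.dist_0_eq_abs] at hS
  rw [Real.dist_eq, Real.dist_0_eq_abs]
  set S := ⨆ w : Q, |CV n ω w - L n ω w - c n ω| / L n ω w
  obtain ⟨hwhatQ, hwhatmin⟩ := hwhat n ω
  exact (abs_div_iInf_sub_one_le_of_isMinOn (hLpos n ω) hwhatmin hwhatQ
    (fun w hw => abs_sub_le_iSup_mul_of_isCompact hQc (hLpos n ω) (hLcont n ω)
      (hCVcont n ω) hw) ((le_abs_self S).trans hS)).trans (by gcongr; exact le_abs_self S)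

/-- Generic asymptotic-optimality lemma: if `ŵ_n` minimizes `CV_n` over a
set `Q` and `sup_{w ∈ Q} |CV_n(w) - L_n(w) - c_n| / L_n(w) → 0` in probability, with
`L_n > 0` on `Q`, then `L_n(ŵ_n)/inf_{w ∈ Q} L_n(w) → 1` in probability. -/
theorem generic_asymptotic_optimality
    {Ω : Type*} [MeasurableSpace Ω] (μ : Measure Ω) [IsProbabilityMeasure μ]
    (K : ℕ) (Q : Set (Fin K → ℝ)) (hQc : IsCompact Q) (hQne : Q.Nonempty)
    (L CV : ℕ → Ω → (Fin K → ℝ) → ℝ)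
    (c : ℕ → Ω → ℝ)
    (hLpos : ∀ n ω, ∀ w ∈ Q, 0 < L n ω w)
    (hLcont : ∀ n ω, ContinuousOn (L n ω) Q)
    (hCVcont : ∀ n ω, ContinuousOn (CV n ω) Q)
    (what : ℕ → Ω → (Fin K → ℝ))
    (hwhat : ∀ n ω, what n ω ∈ Q ∧ ∀ w ∈ Q, CV n ω (what n ω) ≤ CV n ω w)
    (hunif : TendstoInMeasure μ
      (fun n ω => ⨆ w : Q, |CV n ω w - L n ω w - c n ω| / L n ω w)
      atTop (fun _ => (0:ℝ))) :
    TendstoInMeasure μ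
      (fun n ω => L n ω (what n ω) / ⨅ w : Q, L n ω w)
      atTop (fun _ => (1:ℝ)) :=
  generic_asymptotic_optimality_general μ K Q hQc L CV c hLpos hLcont hCVcont what hwhat hunif
end

section
/- Let L(w) = ‖Δ̂(w) − Δ‖² on the simplex Q_n and suppose ξ_n := inf_{w ∈ Q_n} L(w) → ∞ in probability while sup_{w ∈ Q_n} |a_n(w)| / L(w) → 0 in probability, where a_n(w) = CV(w) − L(w) − c_n for a w-free random quantity c_n. Then for ŵ = argmin CV, L(ŵ) ≤ (1 + o_p(1)) ξ_n. -/
/-!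
On the event that the relative approximation error `sup_w |CV(w) - L(w) - c| / L(w)` is below
`δ`, the shifted criterion `CV - c` lies between `(1 - δ) L` and `(1 + δ) L` on all of `Q`, so its
minimizer `ŵ` satisfies `(1 - δ) L(ŵ) ≤ (1 + δ) inf_Q L`. For `δ = ε / (4 + ε)` this forces
`L(ŵ) / ξ < 1 + ε`, hence the bad event has probability at most that of the approximation error
exceeding `δ`, which tends to zero.
-/

open MeasureTheory Filter

section Deterministic

variable {X : Type*} {Q : Set X}

theorem abs_le_mul_of_iSup_abs_div_le [TopologicalSpace X] (hQ : IsCompact Q) {f g : X → ℝ}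
    (hf : ContinuousOn f Q) (hg : ContinuousOn g Q) (hgpos : ∀ w ∈ Q, 0 < g w) {δ : ℝ}
    (h : ⨆ w : Q, |f w| / g w ≤ δ) {w : X} (hw : w ∈ Q) : |f w| ≤ δ * g w := by
  have hbdd : BddAbove (Set.range fun w : Q => |f w| / g w) := by
    rw [← Set.image_eq_range (fun w => |f w| / g w)]
    exact hQ.bddAbove_image (hf.abs.div hg fun w hw => (hgpos w hw).ne')
  rw [← div_le_iff₀ (hgpos w hw)]
  exact (le_ciSup hbdd ⟨w, hw⟩).trans h

theorem one_sub_mul_le_one_add_mul_iInf_of_isMinOn {L CV : X → ℝ} {c δ : ℝ} {ŵ : X}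
    (hδ : 0 ≤ δ) (hŵ : ŵ ∈ Q) (hmin : IsMinOn CV Q ŵ)
    (happrox : ∀ w ∈ Q, |CV w - L w - c| ≤ δ * L w) :
    (1 - δ) * L ŵ ≤ (1 + δ) * ⨅ w : Q, L w := by
  have : Nonempty Q := ⟨⟨ŵ, hŵ⟩⟩
  rw [Real.mul_iInf_of_nonneg (by linarith)]
  refine le_ciInf fun ⟨w, hw⟩ => ?_
  have hŵ' := (abs_le.mp (happrox ŵ hŵ)).1
  have hw' := (abs_le.mp (happrox w hw)).2
  linarith [isMinOn_iff.mp hmin w hw]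

theorem div_lt_one_add_of_one_sub_mul_le {a b ε : ℝ} (hb : 0 < b) (hε : 0 < ε)
    (h : (1 - ε / (4 + ε)) * a ≤ (1 + ε / (4 + ε)) * b) : a / b < 1 + ε := by
  have h4 : 4 * a ≤ (4 + 2 * ε) * b := by
    field_simp at h
    linarith
  rw [div_lt_iff₀ hb]
  nlinarith

end Deterministic

theorem one_sided_asymptotic_optimality_general
    {Ω : Type*} [MeasurableSpace Ω] (μ : Measure Ω)
    (K : ℕ) (Q : Set (Fin K → ℝ)) (hQc : IsCompact Q)
    (L CV : ℕ → Ω → (Fin K → ℝ) → ℝ)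
    (c : ℕ → Ω → ℝ)
    (hLpos : ∀ n ω, ∀ w ∈ Q, 0 < L n ω w)
    (hLcont : ∀ n ω, ContinuousOn (L n ω) Q)
    (hCVcont : ∀ n ω, ContinuousOn (CV n ω) Q)
    (ξ : ℕ → Ω → ℝ) (hξ : ∀ n ω, ξ n ω = ⨅ w : Q, L n ω w)
    (what : ℕ → Ω → (Fin K → ℝ))
    (hwhat : ∀ n ω, what n ω ∈ Q ∧ ∀ w ∈ Q, CV n ω (what n ω) ≤ CV n ω w)
    (hunif : TendstoInMeasure μ
      (fun n ω => ⨆ w : Q, |CV n ω w - L n ω w - c n ω| / L n ω w)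
      atTop (fun _ => (0:ℝ))) :
    ∀ ε : ℝ, 0 < ε →
      Tendsto (fun n => μ {ω | 1 + ε ≤ L n ω (what n ω) / ξ n ω}) atTop (nhds 0) := by
  intro ε hε
  set δ := ε / (4 + ε)
  have hδ : 0 < δ := by positivity
  have hincl : ∀ n, {ω | 1 + ε ≤ L n ω (what n ω) / ξ n ω} ⊆
      {ω | δ ≤ dist (⨆ w : Q, |CV n ω w - L n ω w - c n ω| / L n ω w) 0} := by
    intro n ω hbad
    simp only [Set.mem_ofPred_eq, Real.dist_0_eq_abs] at hbad ⊢
    by_contra! hgood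
    obtain ⟨hŵ, hmin⟩ := hwhat n ω
    have happrox : ∀ w ∈ Q, |CV n ω w - L n ω w - c n ω| ≤ δ * L n ω w := fun w hw =>
      abs_le_mul_of_iSup_abs_div_le hQc
        (((hCVcont n ω).sub (hLcont n ω)).sub continuousOn_const) (hLcont n ω) (hLpos n ω)
        ((le_abs_self _).trans hgood.le) hw
    have hratio :=
      one_sub_mul_le_one_add_mul_iInf_of_isMinOn hδ.le hŵ (isMinOn_iff.mpr hmin) happrox
    rw [← hξ] at hratio
    rcases le_or_gt (ξ n ω) 0 with hξnonpos | hξpos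
    · linarith [div_nonpos_of_nonneg_of_nonpos (hLpos n ω _ hŵ).le hξnonpos]
    · exact (div_lt_one_add_of_one_sub_mul_le hξpos hε hratio).not_ge hbad
  exact tendsto_of_tendsto_of_tendsto_of_le_of_le tendsto_const_nhds
    (tendstoInMeasure_iff_dist.mp hunif δ hδ) (fun _ => zero_le) fun n => measure_mono (hincl n)

/-- One-sided asymptotic optimality: with `ξ_n = inf_{w ∈ Q} L_n(w) → ∞`
in probability and uniform approximation `sup_{w ∈ Q} |CV_n(w) - L_n(w) - c_n|/L_n(w) → 0`
in probability, the CV minimizer `ŵ_n` satisfies `L_n(ŵ_n)/ξ_n ≤ 1 + o_p(1)`, i.e. for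
every `ε > 0`, `P(L_n(ŵ_n)/ξ_n ≥ 1 + ε) → 0`. -/
theorem one_sided_asymptotic_optimality
    {Ω : Type*} [MeasurableSpace Ω] (μ : Measure Ω) [IsProbabilityMeasure μ]
    (K : ℕ) (Q : Set (Fin K → ℝ)) (hQc : IsCompact Q) (hQne : Q.Nonempty)
    (L CV : ℕ → Ω → (Fin K → ℝ) → ℝ)
    (c : ℕ → Ω → ℝ)
    (hLpos : ∀ n ω, ∀ w ∈ Q, 0 < L n ω w)
    (hLcont : ∀ n ω, ContinuousOn (L n ω) Q)
    (hCVcont : ∀ n ω, ContinuousOn (CV n ω) Q)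
    (ξ : ℕ → Ω → ℝ) (hξ : ∀ n ω, ξ n ω = ⨅ w : Q, L n ω w)
    (hξdiv : ∀ C : ℝ, Tendsto (fun n => μ {ω | ξ n ω ≤ C}) atTop (nhds 0))
    (what : ℕ → Ω → (Fin K → ℝ))
    (hwhat : ∀ n ω, what n ω ∈ Q ∧ ∀ w ∈ Q, CV n ω (what n ω) ≤ CV n ω w)
    (hunif : TendstoInMeasure μ
      (fun n ω => ⨆ w : Q, |CV n ω w - L n ω w - c n ω| / L n ω w)
      atTop (fun _ => (0:ℝ))) :
    ∀ ε : ℝ, 0 < ε →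
      Tendsto (fun n => μ {ω | 1 + ε ≤ L n ω (what n ω) / ξ n ω}) atTop (nhds 0) :=
  one_sided_asymptotic_optimality_general μ K Q hQc L CV c hLpos hLcont hCVcont ξ hξ what hwhat
    hunif
end
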